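/- arXiv:1601.06331 — 10 statements merged into one kernel-verified Lean document; each statement's English description precedes it below -/
import Mathlib

section
/- Let q ∈ ℝⁿ with q ⪰ 0 componentwise. Then q ∈ C if and only if for every γ ∈ ℝⁿ with γ ⪰ 0 there exists a priority decision d ∈ D such that ⟨γ, q⟩ ≤ ⟨γ, p(d)⟩; equivalently, q ∈ C if and only if for every γ ⪰ 0, ⟨γ, q⟩ ≤ max_{d ∈ D} ⟨γ, p(d)⟩. -/
open Finset Set

/-- `inDS S d` : the priority decision `d` assigns the `|S|` highest priorities
(i.e. the ranks `k` with `(k : ℕ) < S.card`) exactly to the users in `S`. -/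
def inDS {n : ℕ} (S : Finset (Fin n)) (d : Equiv.Perm (Fin n)) : Prop :=
  ∀ k : Fin n, d k ∈ S ↔ (k : ℕ) < S.card

/-- The projection `x^S` of a vector on the coordinates in `S`. -/
def projS {n : ℕ} (S : Finset (Fin n)) (x : Fin n → ℝ) : Fin n → ℝ :=
  fun i => if i ∈ S then x i else 0

/-- Euclidean inner product on `ℝⁿ`. -/
def ip {n : ℕ} (a b : Fin n → ℝ) : ℝ := ∑ i, a i * b i

/-- `P = {p(d) : d ∈ D}`. -/
def Pfull {n : ℕ} (p : Equiv.Perm (Fin n) → Fin n → ℝ) : Set (Fin n → ℝ) :=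
  Set.range p

/-- `P^S = {p(d)^S : d ∈ D(S)}`. -/
def PS {n : ℕ} (p : Equiv.Perm (Fin n) → Fin n → ℝ) (S : Finset (Fin n)) :
    Set (Fin n → ℝ) :=
  {y | ∃ d : Equiv.Perm (Fin n), inDS S d ∧ y = projS S (p d)}

/-- `C` : the set of nonnegative vectors dominated by a point of `conv(P)`. -/
def Cfull {n : ℕ} (p : Equiv.Perm (Fin n) → Fin n → ℝ) : Set (Fin n → ℝ) :=
  {q | (∀ i, 0 ≤ q i) ∧ ∃ x ∈ convexHull ℝ (Pfull p), ∀ i, q i ≤ x i}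

/-- `C^S` : nonnegative vectors supported on `S` dominated by a point of `conv(P^S)`. -/
def CS {n : ℕ} (p : Equiv.Perm (Fin n) → Fin n → ℝ) (S : Finset (Fin n)) :
    Set (Fin n → ℝ) :=
  {q | (∀ i, 0 ≤ q i) ∧ (∀ i, i ∉ S → q i = 0) ∧
    ∃ x ∈ convexHull ℝ (PS p S), ∀ i, q i ≤ x i}

/-- `B^S` : nonnegative vectors supported on `S` dominating a point of `conv(P^S)`. -/
def BS {n : ℕ} (p : Equiv.Perm (Fin n) → Fin n → ℝ) (S : Finset (Fin n)) :
    Set (Fin n → ℝ) :=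
  {q | (∀ i, 0 ≤ q i) ∧ (∀ i, i ∉ S → q i = 0) ∧
    ∃ x ∈ convexHull ℝ (PS p S), ∀ i, x i ≤ q i}

/-- `S_i(d)` : the set of users with higher priority than user `i` under decision `d`. -/
def higherSet {n : ℕ} (d : Equiv.Perm (Fin n)) (i : Fin n) : Set (Fin n) :=
  {j | (d.symm j : ℕ) < (d.symm i : ℕ)}

/-- Monotonicity in payoffs: if `S_i(d₁) ⊆ S_i(d₂)` then `p_i(d₁) ≥ p_i(d₂)`. -/
def Mono {n : ℕ} (p : Equiv.Perm (Fin n) → Fin n → ℝ) : Prop :=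
  ∀ d₁ d₂ : Equiv.Perm (Fin n), ∀ i : Fin n,
    higherSet d₁ i ⊆ higherSet d₂ i → p d₂ i ≤ p d₁ i

/-- The inner-bound region `R_IB`. -/
def RIB {n : ℕ} (p : Equiv.Perm (Fin n) → Fin n → ℝ) : Set (Fin n → ℝ) :=
  {q | (∀ i, 0 ≤ q i) ∧ ∃ α : Fin n → ℝ, (∀ i, 0 < α i) ∧
    ∀ S : Finset (Fin n), ∀ d : Equiv.Perm (Fin n), inDS S d →
      ∑ i ∈ S, α i * q i ≤ ∑ i ∈ S, α i * p d i}

/-- The region `R = {q ⪰ 0 : ∀ S, q^S ∈ C^S \ B^S}`. -/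
def Rreg {n : ℕ} (p : Equiv.Perm (Fin n) → Fin n → ℝ) : Set (Fin n → ℝ) :=
  {q | (∀ i, 0 ≤ q i) ∧ ∀ S : Finset (Fin n), projS S q ∈ CS p S \ BS p S}

/-
C is the lower closure of the polytope conv(P) inside the orthant. If q ⪯ x ∈ conv(P), then for
γ ⪰ 0 we get ⟨γ, q⟩ ≤ ⟨γ, x⟩, and a linear functional attains its maximum on conv(P) at a vertex.
Conversely, if q is dominated by no point of conv(P), the compact convex set conv(P) is disjoint
from the closed convex cone q + ℝⁿ₊ and Hahn–Banach separates them strictly. The separating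
functional is bounded below on q + ℝⁿ₊, which forces its coefficient vector γ to be ⪰ 0, and then
⟨γ, q⟩ > ⟨γ, p(d)⟩ for every d.
-/

open Matrix

variable {ι : Type*} [Fintype ι]

theorem nonneg_of_bddBelow_dotProduct_image_Ici {γ q : ι → ℝ}
    (h : BddBelow ((γ ⬝ᵥ ·) '' Ici q)) : 0 ≤ γ := by
  classical
  obtain ⟨m, hm⟩ := h
  intro i
  by_contra! hγi
  rw [Pi.zero_apply] at hγi
  have hqm : m ≤ γ ⬝ᵥ q := hm ⟨q, self_mem_Ici, rfl⟩
  -- along the ray `q + t • eᵢ ⊆ Ici q` the functional decreases with slope `γ i < 0`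
  set t := (γ ⬝ᵥ q - m + 1) / -γ i
  have ht : 0 ≤ t := div_nonneg (by linarith) (by linarith)
  have hmem : q + t • Pi.single i 1 ∈ Ici q :=
    show q ≤ _ from le_add_of_nonneg_right (smul_nonneg ht (Pi.single_nonneg.mpr zero_le_one))
  have hval : γ ⬝ᵥ (q + t • Pi.single i 1) = m - 1 := by
    simp only [dotProduct_add, dotProduct_smul, dotProduct_single, mul_one, smul_eq_mul, t]
    field_simp [hγi.ne]
    ring
  linarith [hm ⟨_, hmem, hval⟩]

theorem exists_nonneg_dotProduct_lt_of_notMem_lowerClosure {K : Set (ι → ℝ)}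
    (hKc : Convex ℝ K) (hK : IsCompact K) {q : ι → ℝ} (hq : q ∉ lowerClosure K) :
    ∃ γ : ι → ℝ, 0 ≤ γ ∧ ∀ x ∈ K, γ ⬝ᵥ x < γ ⬝ᵥ q := by
  classical
  have hdisj : Disjoint K (Ici q) :=
    disjoint_left.mpr fun x hxK hqx => hq (mem_lowerClosure.mpr ⟨x, hxK, hqx⟩)
  obtain ⟨f, u, v, hfK, huv, hfq⟩ :=
    geometric_hahn_banach_compact_closed hKc hK (convex_Ici q) isClosed_Ici hdisj
  set γ := (dotProductEquiv ℝ ι).symm f.toLinearMap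
  have hf : ∀ x, γ ⬝ᵥ x = f x := fun x =>
    LinearMap.congr_fun ((dotProductEquiv ℝ ι).apply_symm_apply _) x
  refine ⟨γ, nonneg_of_bddBelow_dotProduct_image_Ici (q := q) ⟨v, ?_⟩, fun x hx => ?_⟩
  · rintro _ ⟨y, hy, rfl⟩
    exact (hf y ▸ hfq y hy).le
  · rw [hf, hf]
    linarith [hfK x hx, hfq q self_mem_Ici]

theorem mem_lowerClosure_iff_forall_nonneg_dotProduct {K : Set (ι → ℝ)}
    (hKc : Convex ℝ K) (hK : IsCompact K) {q : ι → ℝ} :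
    q ∈ lowerClosure K ↔ ∀ γ : ι → ℝ, 0 ≤ γ → ∃ x ∈ K, γ ⬝ᵥ q ≤ γ ⬝ᵥ x := by
  refine ⟨fun hq γ hγ => ?_, fun h => ?_⟩
  · obtain ⟨x, hxK, hqx⟩ := mem_lowerClosure.mp hq
    exact ⟨x, hxK, dotProduct_le_dotProduct_of_nonneg_left hqx hγ⟩
  · by_contra hq
    obtain ⟨γ, hγ, hsep⟩ := exists_nonneg_dotProduct_lt_of_notMem_lowerClosure hKc hK hq
    obtain ⟨x, hxK, hqx⟩ := h γ hγ
    exact (hsep x hxK).not_ge hqx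

theorem mem_lowerClosure_convexHull_iff {s : Set (ι → ℝ)} (hs : s.Finite) {q : ι → ℝ} :
    q ∈ lowerClosure (convexHull ℝ s) ↔ ∀ γ : ι → ℝ, 0 ≤ γ → ∃ y ∈ s, γ ⬝ᵥ q ≤ γ ⬝ᵥ y := by
  rw [mem_lowerClosure_iff_forall_nonneg_dotProduct (convex_convexHull ℝ s)
    (hs.isCompact_convexHull ℝ)]
  refine forall₂_congr fun γ _ => ⟨fun ⟨x, hx, hqx⟩ => ?_, fun ⟨y, hy, hqy⟩ =>
    ⟨y, subset_convexHull ℝ s hy, hqy⟩⟩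
  obtain ⟨y, hy, hxy⟩ := ((dotProductBilin ℝ ℝ γ).convexOn convex_univ).exists_ge_of_mem_convexHull
    (subset_univ s) hx
  exact ⟨y, hy, hqx.trans hxy⟩

theorem le_ciSup_iff_exists_le_of_finite {α : Type*} [ConditionallyCompleteLinearOrder α]
    [Nonempty ι] {f : ι → α} {a : α} : a ≤ ⨆ i, f i ↔ ∃ i, a ≤ f i := by
  rw [← Finset.sup'_univ_eq_ciSup, Finset.le_sup'_iff]
  simp

theorem mem_Cfull_iff {n : ℕ} {p : Equiv.Perm (Fin n) → Fin n → ℝ} {q : Fin n → ℝ} :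
    q ∈ Cfull p ↔ 0 ≤ q ∧ q ∈ lowerClosure (convexHull ℝ (range p)) := by
  simp [Cfull, Pfull, mem_lowerClosure, Pi.le_def]

theorem ip_eq_dotProduct {n : ℕ} (a b : Fin n → ℝ) : ip a b = a ⬝ᵥ b := rfl

theorem stmt0_general {n : ℕ}
    (p : Equiv.Perm (Fin n) → Fin n → ℝ)
    (q : Fin n → ℝ) (hq : ∀ i, 0 ≤ q i) :
    (q ∈ Cfull p ↔
      ∀ γ : Fin n → ℝ, (∀ i, 0 ≤ γ i) →
        ∃ d : Equiv.Perm (Fin n), ip γ q ≤ ip γ (p d)) ∧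
    (q ∈ Cfull p ↔
      ∀ γ : Fin n → ℝ, (∀ i, 0 ≤ γ i) →
        ip γ q ≤ sSup (Set.range fun d : Equiv.Perm (Fin n) => ip γ (p d))) := by
  have hC : q ∈ Cfull p ↔ ∀ γ : Fin n → ℝ, (∀ i, 0 ≤ γ i) →
      ∃ d : Equiv.Perm (Fin n), ip γ q ≤ ip γ (p d) := by
    rw [mem_Cfull_iff, and_iff_right (show 0 ≤ q from hq),
      mem_lowerClosure_convexHull_iff (finite_range p)]
    simp only [exists_range_iff, ip_eq_dotProduct, Pi.le_def, Pi.zero_apply]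
  exact ⟨hC, hC.trans <| forall₂_congr fun γ _ => le_ciSup_iff_exists_le_of_finite.symm⟩

theorem stmt0 {n : ℕ} (hn : 1 ≤ n)
    (p : Equiv.Perm (Fin n) → Fin n → ℝ) (hp : ∀ d i, 0 ≤ p d i)
    (q : Fin n → ℝ) (hq : ∀ i, 0 ≤ q i) :
    (q ∈ Cfull p ↔
      ∀ γ : Fin n → ℝ, (∀ i, 0 ≤ γ i) →
        ∃ d : Equiv.Perm (Fin n), ip γ q ≤ ip γ (p d)) ∧
    (q ∈ Cfull p ↔
      ∀ γ : Fin n → ℝ, (∀ i, 0 ≤ γ i) →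
        ip γ q ≤ sSup (Set.range fun d : Equiv.Perm (Fin n) => ip γ (p d))) :=
  stmt0_general p q hq
end

section
/- Suppose the system satisfies monotonicity in payoffs. Then for every q ∈ C and every subset S ⊆ N, the projection q^S belongs to C^S. -/
/-!
Moving the users of `S` to the front of a decision `d`, keeping the order of `d` within `S` and
within its complement, gives a decision `d' ∈ D(S)` under which every user of `S` has no more users
ahead of it than under `d`; by monotonicity `p(d)^S ⪯ p(d')^S`. So every point of `P` projects
under `x ↦ x^S` into the lower closure of `conv(P^S)`. That set is convex and `x ↦ x^S` is linear
and monotone, so the same holds on `conv(P)`, and `q^S ⪯ x^S` for the point `x ⪰ q` of `conv(P)`.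
-/

open Finset Set

theorem Convex.lowerClosure {𝕜 E : Type*} [Semiring 𝕜] [PartialOrder 𝕜] [AddCommMonoid E]
    [PartialOrder E] [IsOrderedAddMonoid E] [Module 𝕜 E] [PosSMulMono 𝕜 E] {s : Set E}
    (hs : Convex 𝕜 s) : Convex 𝕜 (lowerClosure s : Set E) := by
  rintro x ⟨y, hy, hxy⟩ x' ⟨y', hy', hxy'⟩ a b ha hb hab
  exact ⟨a • y + b • y', hs hy hy' ha hb hab,
    add_le_add (smul_le_smul_of_nonneg_left hxy ha) (smul_le_smul_of_nonneg_left hxy' hb)⟩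

theorem Tuple.strictMono_comp_sort {α : Type*} [LinearOrder α] {n : ℕ} {f : Fin n → α}
    (hf : Function.Injective f) : StrictMono (f ∘ Tuple.sort f) :=
  (Tuple.monotone_sort f).strictMono_of_injective (hf.comp (Tuple.sort f).injective)

theorem Finset.card_filter_equiv_apply_mem {α β : Type*} [Fintype α] [DecidableEq β]
    (σ : α ≃ β) (S : Finset β) : #{a | σ a ∈ S} = #S := by
  rw [← S.card_map σ.symm.toEmbedding]
  congr 1
  ext a
  simp [Finset.mem_map_equiv]

section

variable {n : ℕ}

theorem isLinearMap_projS (S : Finset (Fin n)) : IsLinearMap ℝ (projS S) where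
  map_add x y := by ext i; by_cases hi : i ∈ S <;> simp [projS, hi]
  map_smul c x := by ext i; by_cases hi : i ∈ S <;> simp [projS, hi]

theorem monotone_projS (S : Finset (Fin n)) : Monotone (projS S) := by
  intro x y hxy i
  by_cases hi : i ∈ S <;> simp [projS, hi, hxy i]

theorem projS_nonneg (S : Finset (Fin n)) {x : Fin n → ℝ} (hx : ∀ i, 0 ≤ x i) (i : Fin n) :
    0 ≤ projS S x i := by
  by_cases hi : i ∈ S <;> simp [projS, hi, hx i]

theorem exists_inDS_higherSet_subset (S : Finset (Fin n)) (d : Equiv.Perm (Fin n)) :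
    ∃ d' : Equiv.Perm (Fin n), inDS S d' ∧ ∀ i ∈ S, higherSet d' i ⊆ higherSet d i := by
  classical
  let key : Fin n → Bool ×ₗ Fin n := fun j => toLex (decide (j ∉ S), d.symm j)
  have hkey : Function.Injective key := fun a b h =>
    d.symm.injective (congrArg Prod.snd (toLex.injective h))
  have hkey_lt : ∀ i ∈ S, ∀ j, key j < key i → j ∈ S ∧ d.symm j < d.symm i := by
    intro i hi j hj
    by_cases hjS : j ∈ S <;> simp_all [key, Prod.Lex.toLex_lt_toLex, Bool.lt_iff]
  set d' := Tuple.sort key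
  have hd' : StrictMono (key ∘ d') := Tuple.strictMono_comp_sort hkey
  refine ⟨d', fun k => ?_, fun i hi j hj => (hkey_lt i hi j ?_).2⟩
  · rw [← Finset.card_filter_equiv_apply_mem d' S]
    refine (Fin.lt_card_filter_univ_iff_apply_of_imp (fun k => d' k ∈ S) ?_).symm
    intro i j hji hi
    by_contra hj
    have : key (d' i) < key (d' j) := by simp [key, Prod.Lex.toLex_lt_toLex, hi, hj]
    exact absurd (hd'.lt_iff_lt.1 this) (not_lt.2 hji)
  · simpa using hd'.lt_iff_lt.2 hj

theorem exists_mem_PS_projS_le {p : Equiv.Perm (Fin n) → Fin n → ℝ} (hmono : Mono p)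
    (S : Finset (Fin n)) (d : Equiv.Perm (Fin n)) : ∃ y ∈ PS p S, projS S (p d) ≤ y := by
  obtain ⟨d', hd', hsub⟩ := exists_inDS_higherSet_subset S d
  refine ⟨projS S (p d'), ⟨d', hd', rfl⟩, fun i => ?_⟩
  by_cases hi : i ∈ S
  · simpa [projS, hi] using hmono d' d i (hsub i hi)
  · simp [projS, hi]

theorem exists_mem_convexHull_PS_projS_le {p : Equiv.Perm (Fin n) → Fin n → ℝ} (hmono : Mono p)
    (S : Finset (Fin n)) {x : Fin n → ℝ} (hx : x ∈ convexHull ℝ (Pfull p)) :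
    ∃ y ∈ convexHull ℝ (PS p S), projS S x ≤ y := by
  have hP : Pfull p ⊆ projS S ⁻¹' lowerClosure (convexHull ℝ (PS p S)) := by
    rintro _ ⟨d, rfl⟩
    obtain ⟨y, hy, hdy⟩ := exists_mem_PS_projS_le hmono S d
    exact ⟨y, subset_convexHull ℝ _ hy, hdy⟩
  exact convexHull_min hP ((convex_convexHull ℝ _).lowerClosure.is_linear_preimage
    (isLinearMap_projS S)) hx

end

theorem stmt1_general {n : ℕ}
    (p : Equiv.Perm (Fin n) → Fin n → ℝ)
    (hmono : Mono p) :
    ∀ q ∈ Cfull p, ∀ S : Finset (Fin n), projS S q ∈ CS p S := by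
  rintro q ⟨hq0, x, hx, hqx⟩ S
  obtain ⟨y, hy, hxy⟩ := exists_mem_convexHull_PS_projS_le hmono S hx
  exact ⟨projS_nonneg S hq0, fun i hi => if_neg hi, y, hy,
    (monotone_projS S hqx).trans hxy⟩

theorem stmt1 {n : ℕ} (hn : 1 ≤ n)
    (p : Equiv.Perm (Fin n) → Fin n → ℝ) (hp : ∀ d i, 0 ≤ p d i)
    (hmono : Mono p) :
    ∀ q ∈ Cfull p, ∀ S : Finset (Fin n), projS S q ∈ CS p S :=
  stmt1_general p hmono
end

section
/- Suppose the system satisfies monotonicity in payoffs and subset payoff equivalence. Then int(C) ⊆ R_IB, where int denotes the interior in ℝⁿ. -/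
open Finset Set

/-- Subset payoff equivalence: for each nonempty subset S the vectors of P^S lie on
a hyperplane with a nonzero nonnegative normal vector supported on S. -/
def SPE {n : ℕ} (p : Equiv.Perm (Fin n) → Fin n → ℝ) : Prop :=
  ∀ S : Finset (Fin n), S.Nonempty →
    ∃ α : Fin n → ℝ, α ≠ 0 ∧ (∀ i, 0 ≤ α i) ∧ (∀ i, i ∉ S → α i = 0) ∧
      ∀ d₁ d₂ : Equiv.Perm (Fin n), inDS S d₁ → inDS S d₂ →
        ip α (projS S (p d₁)) = ip α (projS S (p d₂))

/-!
Fix weights `α₀` given by subset payoff equivalence for a coalition `W`. For each `S ⊆ W`,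
monotonicity makes `∑_{i ∈ S} α₀ i p_i(d)` independent of `d ∈ D(S)` (reorder `d` so that `S`
comes first, then `W \ S` in a fixed order, landing in `D(W)`), and this common value is the
maximum over all `d`, hence over `conv(P)`. For `q` in the interior of `C` this gives slack
`ε ∑_{i ∈ S} α₀ i` in every inequality of `R_IB`. Users of `W` where `α₀` vanishes form a smaller
coalition, handled by strong induction; a small multiple of its weights is absorbed by the slack.
-/

section

variable {n : ℕ} {p : Equiv.Perm (Fin n) → Fin n → ℝ}

theorem inDS_iff_higherSet_subset {S : Finset (Fin n)} {e : Equiv.Perm (Fin n)} :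
    inDS S e ↔ ∀ i ∈ S, higherSet e i ⊆ S := by
  constructor
  · intro he i hi j hj
    have hi' : ((e.symm i : Fin n) : ℕ) < #S := (he (e.symm i)).1 (by simpa using hi)
    simpa using (he (e.symm j)).2 (by simp only [higherSet, Set.mem_ofPred_eq] at hj; omega)
  · intro he k
    constructor
    · intro hk
      have : #(Iic k) ≤ #S := by
        refine card_le_card_of_injOn e (fun k' hk' => ?_) e.injective.injOn
        rcases (mem_Iic.1 hk').lt_or_eq with hlt | rfl
        · exact he _ hk (by simpa [higherSet] using hlt)
        · exact hk
      simp only [Fin.card_Iic] at this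
      omega
    · intro hk
      by_contra hkS
      have : #S ≤ #(Iio k) := by
        refine card_le_card_of_injOn e.symm (fun i hi => mem_Iio.2 ?_) e.symm.injective.injOn
        by_contra hle
        rcases (not_lt.1 hle).lt_or_eq with hlt | heq
        · have hk : e k ∈ higherSet e i := by simpa [higherSet] using hlt
          exact hkS (by simpa using he i hi hk)
        · exact hkS (by rw [heq]; simpa using hi)
      simp only [Fin.card_Iio] at this
      omega

theorem higherSet_sort {f : Fin n → ℕ} (hf : Function.Injective f) (i : Fin n) :
    higherSet (Tuple.sort f) i = {j | f j < f i} := by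
  have hmono : StrictMono (f ∘ Tuple.sort f) :=
    (Tuple.monotone_sort f).strictMono_of_injective (hf.comp (Tuple.sort f).injective)
  ext j
  simpa [higherSet] using
    (hmono.lt_iff_lt (a := (Tuple.sort f).symm j) (b := (Tuple.sort f).symm i)).symm

/-- Sorting by this key puts `S` first, in the order of `d`, then `W \ S`, then the rest, both
by index. -/
def reorderKey (S W : Finset (Fin n)) (d : Equiv.Perm (Fin n)) (i : Fin n) : ℕ :=
  if i ∈ S then d.symm i else if i ∈ W then n + i else 2 * n + i

def reorder (S W : Finset (Fin n)) (d : Equiv.Perm (Fin n)) : Equiv.Perm (Fin n) :=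
  Tuple.sort (reorderKey S W d)

theorem reorderKey_injective (S W : Finset (Fin n)) (d : Equiv.Perm (Fin n)) :
    Function.Injective (reorderKey S W d) := by
  intro a b h
  have := a.isLt; have := b.isLt; have := (d.symm a).isLt; have := (d.symm b).isLt
  unfold reorderKey at h
  split_ifs at h <;> first | omega | exact d.symm.injective (Fin.ext h)

theorem higherSet_reorder (S W : Finset (Fin n)) (d : Equiv.Perm (Fin n)) (i : Fin n) :
    higherSet (reorder S W d) i = {j | reorderKey S W d j < reorderKey S W d i} :=
  higherSet_sort (reorderKey_injective S W d) i

theorem inDS_reorder_left (S W : Finset (Fin n)) (d : Equiv.Perm (Fin n)) :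
    inDS S (reorder S W d) := by
  refine inDS_iff_higherSet_subset.2 fun i hi j hj => by_contra fun (hjS : j ∉ S) => ?_
  rw [higherSet_reorder, Set.mem_ofPred_eq, reorderKey, reorderKey, if_pos hi, if_neg hjS] at hj
  have := (d.symm i).isLt
  split_ifs at hj <;> omega

theorem inDS_reorder_right {S W : Finset (Fin n)} (hSW : S ⊆ W) (d : Equiv.Perm (Fin n)) :
    inDS W (reorder S W d) := by
  refine inDS_iff_higherSet_subset.2 fun i hi j hj => by_contra fun (hjW : j ∉ W) => ?_
  have hjS : j ∉ S := fun h => hjW (hSW h)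
  rw [higherSet_reorder, Set.mem_ofPred_eq, reorderKey, reorderKey, if_neg hjS, if_neg hjW] at hj
  have := (d.symm i).isLt; have := i.isLt
  split_ifs at hj <;> omega

theorem higherSet_reorder_of_mem (W : Finset (Fin n)) (d : Equiv.Perm (Fin n)) {S : Finset (Fin n)}
    {i : Fin n} (hi : i ∈ S) :
    higherSet (reorder S W d) i = higherSet d i ∩ S := by
  ext j
  have := (d.symm i).isLt; have := j.isLt
  rw [higherSet_reorder]
  by_cases hj : j ∈ S
  · simp [reorderKey, higherSet, hi, hj]
  · simp only [Set.mem_ofPred_eq, reorderKey, hi, hj, if_true, if_false, Set.mem_inter_iff,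
      Finset.mem_coe, and_false, iff_false, not_lt]
    split_ifs <;> omega

theorem higherSet_reorder_congr {S : Finset (Fin n)} (W : Finset (Fin n))
    (d₁ d₂ : Equiv.Perm (Fin n)) {i : Fin n} (hi : i ∉ S) :
    higherSet (reorder S W d₁) i = higherSet (reorder S W d₂) i := by
  ext j
  have := (d₁.symm j).isLt; have := (d₂.symm j).isLt
  simp only [higherSet_reorder, Set.mem_ofPred_eq, reorderKey, hi, if_false]
  split_ifs <;> omega

theorem Mono.apply_eq_of_higherSet_eq (hmono : Mono p)
    {d₁ d₂ : Equiv.Perm (Fin n)} {i : Fin n} (h : higherSet d₁ i = higherSet d₂ i) :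
    p d₁ i = p d₂ i :=
  le_antisymm (hmono d₂ d₁ i h.ge) (hmono d₁ d₂ i h.le)

theorem ip_projS (S : Finset (Fin n)) (α x : Fin n → ℝ) :
    ip α (projS S x) = ∑ i ∈ S, α i * x i := by
  simp only [ip, projS, mul_ite, mul_zero, sum_ite_mem, Finset.univ_inter]

theorem sum_mul_eq_of_inDS (hmono : Mono p) {S W : Finset (Fin n)} (hSW : S ⊆ W)
    {α : Fin n → ℝ}
    (hα : ∀ d₁ d₂, inDS W d₁ → inDS W d₂ → ∑ i ∈ W, α i * p d₁ i = ∑ i ∈ W, α i * p d₂ i)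
    {d₁ d₂ : Equiv.Perm (Fin n)} (h₁ : inDS S d₁) (h₂ : inDS S d₂) :
    ∑ i ∈ S, α i * p d₁ i = ∑ i ∈ S, α i * p d₂ i := by
  set e₁ := reorder S W d₁
  set e₂ := reorder S W d₂
  have hreorder {d} (hd : inDS S d) {i} (hi : i ∈ S) : p (reorder S W d) i = p d i :=
    hmono.apply_eq_of_higherSet_eq <| by
      rw [higherSet_reorder_of_mem W d hi,
        Set.inter_eq_left.2 (inDS_iff_higherSet_subset.1 hd i hi)]
  have hdiff : ∑ i ∈ S, α i * (p d₁ i - p d₂ i) = 0 :=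
    calc ∑ i ∈ S, α i * (p d₁ i - p d₂ i) = ∑ i ∈ S, α i * (p e₁ i - p e₂ i) :=
          sum_congr rfl fun i hi => by rw [hreorder h₁ hi, hreorder h₂ hi]
      _ = ∑ i ∈ W, α i * (p e₁ i - p e₂ i) :=
          sum_subset hSW fun i _ hi => by
            rw [hmono.apply_eq_of_higherSet_eq (higherSet_reorder_congr W d₁ d₂ hi), sub_self,
              mul_zero]
      _ = 0 := by
          rw [← sub_eq_zero.2 (hα e₁ e₂ (inDS_reorder_right hSW d₁) (inDS_reorder_right hSW d₂)),
            ← sum_sub_distrib]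
          simp only [mul_sub]
  simpa only [mul_sub, sum_sub_distrib, sub_eq_zero] using hdiff

/-- At a vertex `p d'`: moving `S` to the top ranks, in the order of `d'`, can only raise the
payoffs in `S`, and lands in `D(S)`, where the weighted payoff of `S` is constant. -/
theorem sum_mul_le_of_mem_convexHull (hmono : Mono p) {S W : Finset (Fin n)} (hSW : S ⊆ W)
    {α : Fin n → ℝ} (hα₀ : ∀ i, 0 ≤ α i)
    (hα : ∀ d₁ d₂, inDS W d₁ → inDS W d₂ → ∑ i ∈ W, α i * p d₁ i = ∑ i ∈ W, α i * p d₂ i)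
    {x : Fin n → ℝ} (hx : x ∈ convexHull ℝ (Pfull p)) {d : Equiv.Perm (Fin n)} (hd : inDS S d) :
    ∑ i ∈ S, α i * x i ≤ ∑ i ∈ S, α i * p d i := by
  have hlin : IsLinearMap ℝ fun y : Fin n → ℝ => ∑ i ∈ S, α i * y i :=
    ⟨fun y z => by simp only [Pi.add_apply, mul_add, sum_add_distrib],
      fun c y => by simp only [Pi.smul_apply, smul_eq_mul, mul_sum, mul_left_comm]⟩
  refine convexHull_min ?_ (convex_halfSpace_le hlin _) hx
  rintro _ ⟨d', rfl⟩
  calc ∑ i ∈ S, α i * p d' i ≤ ∑ i ∈ S, α i * p (reorder S W d') i :=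
        sum_le_sum fun i hi => mul_le_mul_of_nonneg_left
          (hmono _ _ i (by rw [higherSet_reorder_of_mem W d' hi]; exact Set.inter_subset_left))
          (hα₀ i)
    _ = ∑ i ∈ S, α i * p d i := sum_mul_eq_of_inDS hmono hSW hα (inDS_reorder_left S W d') hd

/-- The inequalities of `R_IB` for the coalitions inside `W`. -/
def IBWeightOn (p : Equiv.Perm (Fin n) → Fin n → ℝ) (q : Fin n → ℝ) (W : Finset (Fin n))
    (α : Fin n → ℝ) : Prop :=
  ∀ S ⊆ W, ∀ d, inDS S d → ∑ i ∈ S, α i * q i ≤ ∑ i ∈ S, α i * p d i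

theorem exists_pos_le_of_pos {ι : Type*} [Fintype ι] (f : ι → ℝ) :
    ∃ m > 0, ∀ i, 0 < f i → m ≤ f i := by
  classical
  rcases (univ.filter (0 < f ·)).eq_empty_or_nonempty with h | h
  · rw [filter_eq_empty_iff] at h
    exact ⟨1, one_pos, fun i hi => absurd hi (h (mem_univ i))⟩
  · obtain ⟨i₀, hi₀, hmin⟩ := exists_min_image _ f h
    exact ⟨f i₀, (mem_filter.1 hi₀).2, fun i hi => hmin i (by simpa using hi)⟩

/-- The witness is `α₀ + δ β`, with `δ` so small that `δ ∑ β q` is absorbed by the slack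
`ε ∑_{i ∈ S} α₀ i ≥ ε m`, `m` the least positive value of `α₀`, whenever `S ⊄ Z`. -/
theorem exists_IBWeightOn_of_slack (hp : ∀ d i, 0 ≤ p d i) {q : Fin n → ℝ}
    (hq : ∀ i, 0 ≤ q i) {ε : ℝ} (hε : 0 < ε) {W Z : Finset (Fin n)} {α₀ β : Fin n → ℝ}
    (hα₀ : ∀ i, 0 ≤ α₀ i) (hZ : ∀ i ∈ W, α₀ i = 0 → i ∈ Z)
    (hslack : ∀ S ⊆ W, ∀ d, inDS S d →
      ∑ i ∈ S, α₀ i * q i + ε * ∑ i ∈ S, α₀ i ≤ ∑ i ∈ S, α₀ i * p d i)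
    (hβ₀ : ∀ i, 0 ≤ β i) (hβ : ∀ i ∈ Z, 0 < β i) (hβZ : IBWeightOn p q Z β) :
    ∃ α, (∀ i, 0 ≤ α i) ∧ (∀ i ∈ W, 0 < α i) ∧ IBWeightOn p q W α := by
  obtain ⟨m, hm, hmle⟩ := exists_pos_le_of_pos α₀
  set B := ∑ i, β i * q i
  have hB : 0 ≤ B := sum_nonneg fun i _ => mul_nonneg (hβ₀ i) (hq i)
  set δ := ε * m / (B + 1)
  have hδ : 0 < δ := by positivity
  have hδB : δ * B ≤ ε * m :=
    calc δ * B ≤ δ * (B + 1) := by linarith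
      _ = ε * m := div_mul_cancel₀ _ (by positivity)
  refine ⟨fun i => α₀ i + δ * β i, fun i => add_nonneg (hα₀ i) (mul_nonneg hδ.le (hβ₀ i)),
    fun i hi => ?_, fun S hSW d hd => ?_⟩
  · show 0 < α₀ i + δ * β i
    rcases (hα₀ i).eq_or_lt with h | h
    · rw [← h, zero_add]
      exact mul_pos hδ (hβ i (hZ i hi h.symm))
    · exact add_pos_of_pos_of_nonneg h (mul_nonneg hδ.le (hβ₀ i))
  have hsplit (y : Fin n → ℝ) : ∑ i ∈ S, (α₀ i + δ * β i) * y i =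
      ∑ i ∈ S, α₀ i * y i + δ * ∑ i ∈ S, β i * y i := by
    simp only [add_mul, sum_add_distrib, mul_sum, mul_assoc]
  rw [hsplit, hsplit]
  have hα₀S := hslack S hSW d hd
  have hsum : 0 ≤ ε * ∑ i ∈ S, α₀ i := mul_nonneg hε.le (sum_nonneg fun i _ => hα₀ i)
  by_cases hSZ : S ⊆ Z
  · linarith [mul_le_mul_of_nonneg_left (hβZ S hSZ d hd) hδ.le]
  obtain ⟨i₁, hi₁S, hi₁Z⟩ := Finset.not_subset.1 hSZ
  have hm_le : m ≤ ∑ i ∈ S, α₀ i :=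
    (hmle i₁ ((hα₀ i₁).lt_of_ne fun h => hi₁Z (hZ i₁ (hSW hi₁S) h.symm))).trans
      (single_le_sum (fun i _ => hα₀ i) hi₁S)
  have hqB : ∑ i ∈ S, β i * q i ≤ B := sum_le_univ_sum_of_nonneg fun i => mul_nonneg (hβ₀ i) (hq i)
  have hp₀ : 0 ≤ ∑ i ∈ S, β i * p d i := sum_nonneg fun i _ => mul_nonneg (hβ₀ i) (hp d i)
  linarith [mul_le_mul_of_nonneg_left hqB hδ.le, mul_le_mul_of_nonneg_left hm_le hε.le,
    mul_nonneg hδ.le hp₀]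

theorem exists_IBWeightOn (hp : ∀ d i, 0 ≤ p d i) (hmono : Mono p) (hspe : SPE p)
    {q : Fin n → ℝ} (hq : ∀ i, 0 ≤ q i) {ε : ℝ} (hε : 0 < ε) {x : Fin n → ℝ}
    (hx : x ∈ convexHull ℝ (Pfull p)) (hqx : ∀ i, q i + ε ≤ x i) (W : Finset (Fin n)) :
    ∃ α, (∀ i, 0 ≤ α i) ∧ (∀ i ∈ W, 0 < α i) ∧ IBWeightOn p q W α := by
  induction W using Finset.strongInduction with
  | _ W ih =>
  rcases W.eq_empty_or_nonempty with rfl | hW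
  · exact ⟨1, fun _ => zero_le_one, by simp, fun S hS d _ => by simp [subset_empty.1 hS]⟩
  obtain ⟨α₀, hα₀ne, hα₀, hα₀W, hα₀eq⟩ := hspe W hW
  simp only [ip_projS] at hα₀eq
  have hZW : W.filter (α₀ · = 0) ⊂ W := by
    obtain ⟨i, hi⟩ := Function.ne_iff.1 hα₀ne
    exact filter_ssubset.2 ⟨i, by_contra fun h => hi (hα₀W i h), hi⟩
  obtain ⟨β, hβ₀, hβ, hβZ⟩ := ih _ hZW
  refine exists_IBWeightOn_of_slack hp hq hε hα₀ (fun i hi h => mem_filter.2 ⟨hi, h⟩) ?_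
    hβ₀ hβ hβZ
  intro S hSW d hd
  calc ∑ i ∈ S, α₀ i * q i + ε * ∑ i ∈ S, α₀ i = ∑ i ∈ S, α₀ i * (q i + ε) := by
        rw [mul_comm ε, sum_mul, ← sum_add_distrib]; simp only [mul_add]
    _ ≤ ∑ i ∈ S, α₀ i * x i := sum_le_sum fun i _ => mul_le_mul_of_nonneg_left (hqx i) (hα₀ i)
    _ ≤ ∑ i ∈ S, α₀ i * p d i := sum_mul_le_of_mem_convexHull hmono hSW hα₀ hα₀eq hx hd

theorem exists_add_le_of_mem_interior {q : Fin n → ℝ} (hq : q ∈ interior (Cfull p)) :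
    ∃ ε > 0, ∃ x ∈ convexHull ℝ (Pfull p), ∀ i, q i + ε ≤ x i := by
  obtain ⟨ε, hε, hball⟩ := Metric.mem_nhds_iff.1 (mem_interior_iff_mem_nhds.1 hq)
  have hmem : (fun i => q i + ε / 2) ∈ Cfull p := hball <| by
    rw [Metric.mem_ball, dist_pi_lt_iff hε]
    intro i
    rw [Real.dist_eq, add_sub_cancel_left, abs_of_pos (half_pos hε)]
    exact half_lt_self hε
  obtain ⟨-, x, hx, hqx⟩ := hmem
  exact ⟨ε / 2, half_pos hε, x, hx, hqx⟩

end

theorem stmt6_general {n : ℕ}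
    (p : Equiv.Perm (Fin n) → Fin n → ℝ) (hp : ∀ d i, 0 ≤ p d i)
    (hmono : Mono p) (hspe : SPE p) :
    interior (Cfull p) ⊆ RIB p := by
  intro q hq
  have hq₀ : ∀ i, 0 ≤ q i := (interior_subset hq).1
  obtain ⟨ε, hε, x, hx, hqx⟩ := exists_add_le_of_mem_interior hq
  obtain ⟨α, -, hα, hαW⟩ := exists_IBWeightOn hp hmono hspe hq₀ hε hx hqx univ
  exact ⟨hq₀, α, fun i => hα i (mem_univ i), fun S d hd => hαW S (subset_univ S) d hd⟩

theorem stmt6 {n : ℕ} (hn : 1 ≤ n)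
    (p : Equiv.Perm (Fin n) → Fin n → ℝ) (hp : ∀ d i, 0 ≤ p d i)
    (hmono : Mono p) (hspe : SPE p) :
    interior (Cfull p) ⊆ RIB p :=
  stmt6_general p hp hmono hspe
end

section
/- Suppose n = 2 and the system satisfies monotonicity in payoffs. Then int(C) ⊆ R_IB, where int denotes the interior in ℝ². -/
open Finset Set

/-!
With two users there are only two decisions, `1` (user 0 first) and `swap 0 1` (user 1 first), so
`conv P` is the segment from `a = p 1` to `b = p (swap 0 1)`. Monotonicity says that a user's payoff
is largest when it is served first, so `C` lies in the half-planes `r₀ ≤ a₀` and `r₁ ≤ b₁`, and an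
interior point `q` of `C` satisfies both strictly: these are the singleton constraints of `R_IB`.
For `S = N` one needs weights `α ≻ 0` with `α ⬝ q ≤ α ⬝ a` and `α ⬝ q ≤ α ⬝ b`. As `q` lies below a
point of the segment, `α = (1, 1)` works when `q ⪯ a` and `q ⪯ b`; otherwise a positive normal
of `a - q` or of `b - q` does.
-/

lemma lt_of_mem_interior_of_subset {ι : Type*} {K : Set (ι → ℝ)} {q : ι → ℝ} {i : ι} {c : ℝ}
    (hK : K ⊆ {r | r i ≤ c}) (hq : q ∈ interior K) : q i < c := by
  have h := interior_mono hK hq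
  rwa [show {r : ι → ℝ | r i ≤ c} = Function.eval i ⁻¹' Iic c from rfl,
    ← (isOpenMap_eval i).preimage_interior_eq_interior_preimage (continuous_apply i),
    interior_Iic] at h

lemma Cfull_subset_setOf_apply_le {n : ℕ} (p : Equiv.Perm (Fin n) → Fin n → ℝ) {i : Fin n}
    {c : ℝ} (h : ∀ d, p d i ≤ c) : Cfull p ⊆ {r | r i ≤ c} := by
  rintro r ⟨-, x, hx, hrx⟩
  have hP : convexHull ℝ (Pfull p) ⊆ {y | y i ≤ c} :=
    convexHull_min (Set.range_subset_iff.2 h)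
      (convex_halfSpace_le (LinearMap.proj i : (Fin n → ℝ) →ₗ[ℝ] ℝ).isLinear c)
  exact (hrx i).trans (hP hx)

lemma higherSet_apply_zero {n : ℕ} (d : Equiv.Perm (Fin (n + 1))) : higherSet d (d 0) = ∅ := by
  ext j
  simp [higherSet]

lemma Mono.le_apply_zero {n : ℕ} {p : Equiv.Perm (Fin (n + 1)) → Fin (n + 1) → ℝ}
    (hmono : Mono p) (d d' : Equiv.Perm (Fin (n + 1))) : p d' (d 0) ≤ p d (d 0) :=
  hmono d d' (d 0) (by simp [higherSet_apply_zero])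

lemma Mono.lt_of_mem_interior_Cfull {n : ℕ} {p : Equiv.Perm (Fin (n + 1)) → Fin (n + 1) → ℝ}
    (hmono : Mono p) (d : Equiv.Perm (Fin (n + 1))) {q : Fin (n + 1) → ℝ}
    (hq : q ∈ interior (Cfull p)) : q (d 0) < p d (d 0) :=
  lt_of_mem_interior_of_subset (Cfull_subset_setOf_apply_le p (hmono.le_apply_zero d)) hq

lemma perm_fin_two_eq (d : Equiv.Perm (Fin 2)) : d = 1 ∨ d = Equiv.swap 0 1 := by
  revert d; decide

lemma convexHull_Pfull_fin_two (p : Equiv.Perm (Fin 2) → Fin 2 → ℝ) :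
    convexHull ℝ (Pfull p) = segment ℝ (p 1) (p (Equiv.swap 0 1)) := by
  rw [← convexHull_pair]
  congr 1
  ext y
  simp only [Pfull, Set.mem_range, Set.mem_insert_iff, Set.mem_singleton_iff]
  constructor
  · rintro ⟨d, rfl⟩
    rcases perm_fin_two_eq d with rfl | rfl <;> simp
  · rintro (rfl | rfl) <;> exact ⟨_, rfl⟩

lemma apply_zero_of_inDS_singleton {n : ℕ} {d : Equiv.Perm (Fin (n + 1))} {i : Fin (n + 1)}
    (hd : inDS {i} d) : d 0 = i := by
  simpa using (hd 0).2 (by simp)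

lemma finset_fin_two_eq (S : Finset (Fin 2)) : S = ∅ ∨ (∃ i, S = {i}) ∨ S = Finset.univ := by
  revert S; decide

lemma mem_RIB_of_fin_two {p : Equiv.Perm (Fin 2) → Fin 2 → ℝ} {q α : Fin 2 → ℝ}
    (hq : ∀ i, 0 ≤ q i) (hα : ∀ i, 0 < α i) (hfirst : ∀ d, q (d 0) ≤ p d (d 0))
    (huniv : ∀ d, ∑ i, α i * q i ≤ ∑ i, α i * p d i) : q ∈ RIB p := by
  refine ⟨hq, α, hα, fun S d hd => ?_⟩
  rcases finset_fin_two_eq S with rfl | ⟨i, rfl⟩ | rfl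
  · simp
  · rw [sum_singleton, sum_singleton, ← apply_zero_of_inDS_singleton hd]
    exact mul_le_mul_of_nonneg_left (hfirst d) (hα _).le
  · exact huniv d

lemma exists_pos_weights_nonneg {A₀ A₁ B₀ B₁ s t : ℝ} (hA₀ : 0 < A₀) (hB₁ : 0 < B₁)
    (hs : 0 ≤ s) (hst : s + t = 1) (h₀ : 0 ≤ s * A₀ + t * B₀) (h₁ : 0 ≤ s * A₁ + t * B₁) :
    ∃ u v : ℝ, 0 < u ∧ 0 < v ∧ 0 ≤ u * A₀ + v * A₁ ∧ 0 ≤ u * B₀ + v * B₁ := by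
  rcases le_or_gt 0 B₀ with hB₀ | hB₀
  · rcases le_or_gt 0 A₁ with hA₁ | hA₁
    · exact ⟨1, 1, one_pos, one_pos, by linarith, by linarith⟩
    · refine ⟨-A₁, A₀, by linarith, hA₀, by linarith, ?_⟩
      nlinarith [mul_nonneg (neg_nonneg.2 hA₁.le) hB₀, mul_pos hA₀ hB₁]
  · refine ⟨B₁, -B₀, hB₁, by linarith, ?_, by linarith⟩
    rcases le_or_gt 0 A₁ with hA₁ | hA₁
    · nlinarith [mul_nonneg (neg_nonneg.2 hB₀.le) hA₁, mul_pos hA₀ hB₁]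
    · have hs' : 0 < s := by
        by_contra! h
        nlinarith
      have ht' : 0 < t := by
        by_contra! h
        nlinarith
      have hcross : (t * -B₀) * (s * -A₁) ≤ (s * A₀) * (t * B₁) :=
        mul_le_mul (by linarith) (by linarith) (by nlinarith) (by nlinarith)
      have hdet : A₁ * B₀ ≤ A₀ * B₁ :=
        le_of_mul_le_mul_left (by linarith [hcross] : s * t * (A₁ * B₀) ≤ s * t * (A₀ * B₁))
          (mul_pos hs' ht')
      linarith

lemma exists_pos_weights_of_le_segment {a b q x : Fin 2 → ℝ} (hx : x ∈ segment ℝ a b)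
    (hqx : ∀ i, q i ≤ x i) (h₀ : q 0 < a 0) (h₁ : q 1 < b 1) :
    ∃ α : Fin 2 → ℝ, (∀ i, 0 < α i) ∧
      ∑ i, α i * q i ≤ ∑ i, α i * a i ∧ ∑ i, α i * q i ≤ ∑ i, α i * b i := by
  obtain ⟨s, t, hs, -, hst, rfl⟩ := hx
  have hx₀ := hqx 0
  have hx₁ := hqx 1
  simp only [Pi.add_apply, Pi.smul_apply, smul_eq_mul] at hx₀ hx₁
  obtain ⟨u, v, hu, hv, ha, hb⟩ := exists_pos_weights_nonneg (A₀ := a 0 - q 0) (A₁ := a 1 - q 1)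
    (B₀ := b 0 - q 0) (B₁ := b 1 - q 1) (sub_pos.2 h₀) (sub_pos.2 h₁) hs hst
    (by linear_combination hx₀ + q 0 * hst) (by linear_combination hx₁ + q 1 * hst)
  refine ⟨![u, v], fun i => by fin_cases i <;> simpa, ?_, ?_⟩ <;>
    simp only [Fin.sum_univ_two, Matrix.cons_val_zero, Matrix.cons_val_one] <;> linarith

theorem stmt7_general (p : Equiv.Perm (Fin 2) → Fin 2 → ℝ)
    (hmono : Mono p) :
    interior (Cfull p) ⊆ RIB p := by
  intro q hq
  obtain ⟨hq_nonneg, x, hx, hqx⟩ := interior_subset hq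
  rw [convexHull_Pfull_fin_two] at hx
  obtain ⟨α, hα, ha, hb⟩ := exists_pos_weights_of_le_segment hx hqx
    (hmono.lt_of_mem_interior_Cfull 1 hq) (hmono.lt_of_mem_interior_Cfull (Equiv.swap 0 1) hq)
  refine mem_RIB_of_fin_two hq_nonneg hα (fun d => (hmono.lt_of_mem_interior_Cfull d hq).le)
    fun d => ?_
  rcases perm_fin_two_eq d with rfl | rfl
  exacts [ha, hb]

theorem stmt7 (p : Equiv.Perm (Fin 2) → Fin 2 → ℝ) (hp : ∀ d i, 0 ≤ p d i)
    (hmono : Mono p) :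
    interior (Cfull p) ⊆ RIB p :=
  stmt7_general p hmono
end

section
/- Suppose all users have exchangeable expected payoffs. Then the system satisfies subset payoff equivalence with the all-ones weights: for every subset S ⊆ N and all priority decisions d₁, d₂ ∈ D(S), Σ_{i∈S} p_i(d₁) = Σ_{i∈S} p_i(d₂). -/
open Finset Set

/-- Exchangeable expected payoffs: swapping the priorities of users i and j
swaps their expected payoffs and leaves every other user's payoff unchanged. -/
def Exch {n : ℕ} (p : Equiv.Perm (Fin n) → Fin n → ℝ) : Prop :=
  ∀ (d : Equiv.Perm (Fin n)) (i j : Fin n),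
    (∀ k, k ≠ i → k ≠ j → p (d.trans (Equiv.swap i j)) k = p d k) ∧
    p (d.trans (Equiv.swap i j)) i = p d j ∧
    p (d.trans (Equiv.swap i j)) j = p d i

/-!
Exchangeability extends from transpositions to all permutations, which gives
`p d k = p 1 (d⁻¹ k)`: a user's payoff depends only on its rank. For `d ∈ D(S)` the users
of `S` hold exactly the ranks below `|S|`, so `∑_{i ∈ S} p_i(d)` is the sum of the rank
payoffs over those ranks, whatever `d` is.
-/

namespace Exch

variable {n : ℕ} {p : Equiv.Perm (Fin n) → Fin n → ℝ}

theorem apply_trans_swap (hexch : Exch p) (d : Equiv.Perm (Fin n)) (i j k : Fin n) :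
    p (d.trans (Equiv.swap i j)) k = p d (Equiv.swap i j k) := by
  obtain ⟨hother, hi, hj⟩ := hexch d i j
  rcases eq_or_ne k i with rfl | hki
  · rw [hi, Equiv.swap_apply_left]
  rcases eq_or_ne k j with rfl | hkj
  · rw [hj, Equiv.swap_apply_right]
  rw [hother k hki hkj, Equiv.swap_apply_of_ne_of_ne hki hkj]

theorem apply_trans (hexch : Exch p) (σ : Equiv.Perm (Fin n)) :
    ∀ d k, p (d.trans σ) k = p d (σ.symm k) := by
  induction σ using Equiv.Perm.swap_induction_on with
  | one => intro d k; rfl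
  | swap_mul σ i j _ ih =>
    intro d k
    rw [Equiv.Perm.mul_def, ← Equiv.trans_assoc, apply_trans_swap hexch, ih]
    rfl

theorem apply_eq_rank (hexch : Exch p) (d : Equiv.Perm (Fin n)) (k : Fin n) :
    p d k = p (Equiv.refl _) (d.symm k) :=
  hexch.apply_trans d (Equiv.refl _) k

end Exch

theorem inDS.sum_comp_symm {M : Type*} [AddCommMonoid M] {n : ℕ} {S : Finset (Fin n)}
    {d : Equiv.Perm (Fin n)} (hd : inDS S d) (f : Fin n → M) :
    ∑ i ∈ S, f (d.symm i) = ∑ k ∈ univ.filter (fun k : Fin n => (k : ℕ) < S.card), f k :=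
  Finset.sum_equiv d.symm (fun i => by simpa using hd (d.symm i)) (fun _ _ => rfl)

theorem stmt9_general {n : ℕ}
    (p : Equiv.Perm (Fin n) → Fin n → ℝ)
    (hexch : Exch p) :
    ∀ S : Finset (Fin n), ∀ d₁ d₂ : Equiv.Perm (Fin n), inDS S d₁ → inDS S d₂ →
      ∑ i ∈ S, p d₁ i = ∑ i ∈ S, p d₂ i := by
  intro S d₁ d₂ h₁ h₂
  simp only [hexch.apply_eq_rank d₁, hexch.apply_eq_rank d₂, h₁.sum_comp_symm, h₂.sum_comp_symm]

theorem stmt9 {n : ℕ} (hn : 1 ≤ n)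
    (p : Equiv.Perm (Fin n) → Fin n → ℝ) (hp : ∀ d i, 0 ≤ p d i)
    (hexch : Exch p) :
    ∀ S : Finset (Fin n), ∀ d₁ d₂ : Equiv.Perm (Fin n), inDS S d₁ → inDS S d₂ →
      ∑ i ∈ S, p d₁ i = ∑ i ∈ S, p d₂ i :=
  stmt9_general p hexch
end

section
/- Suppose all users have exchangeable expected payoffs and the system satisfies monotonicity in payoffs. Then int(C) ⊆ R_IB, where int denotes the interior in ℝⁿ. -/
open Finset Set

/-!
Exchangeability says that the payoff of user `i` under `d` depends only on its rank `d⁻¹ i`,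
through the payoffs `g = p 1` of the identity decision, and monotonicity makes `g` antitone in
the rank. The total payoff of a set `S` of users is therefore largest when `S` holds the `|S|`
highest priorities, that is, for `d ∈ D(S)`. Every point of `conv(P)`, hence of `C`, thus
satisfies the inequalities defining `R_IB` with the weights `α = 1`.
-/

open Equiv

theorem Finset.sum_le_sum_of_card_eq_of_forall_sdiff_le {ι M : Type*} [DecidableEq ι]
    [AddCommMonoid M] [LinearOrder M] [IsOrderedAddMonoid M] {s t : Finset ι} {f : ι → M}
    (hcard : #s = #t) (h : ∀ i ∈ s \ t, ∀ j ∈ t \ s, f i ≤ f j) :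
    ∑ i ∈ s, f i ≤ ∑ i ∈ t, f i := by
  have hsdiff_card : #(s \ t) = #(t \ s) := card_sdiff_eq_card_sdiff_iff.mpr hcard
  have hsdiff : ∑ i ∈ s \ t, f i ≤ ∑ j ∈ t \ s, f j := by
    rcases (s \ t).eq_empty_or_nonempty with hempty | hne
    · rw [hempty, card_empty, eq_comm, card_eq_zero] at hsdiff_card
      simp [hempty, hsdiff_card]
    · calc ∑ i ∈ s \ t, f i ≤ #(s \ t) • (s \ t).sup' hne f :=
            sum_le_card_nsmul _ _ _ fun i hi => le_sup' f hi
        _ = #(t \ s) • (s \ t).sup' hne f := by rw [hsdiff_card]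
        _ ≤ ∑ j ∈ t \ s, f j :=
            card_nsmul_le_sum _ _ _ fun j hj => sup'_le hne f fun i hi => h i hi j hj
  rw [← sum_sdiff (inter_subset_left : s ∩ t ⊆ s), ← sum_sdiff (inter_subset_left : t ∩ s ⊆ t),
    sdiff_inter_self_left, sdiff_inter_self_left, inter_comm]
  exact add_le_add_left hsdiff _

section Payoffs

variable {n : ℕ} {p : Perm (Fin n) → Fin n → ℝ}

theorem Exch.apply_trans_s10 (hexch : Exch p) (d σ : Perm (Fin n)) (m : Fin n) :
    p (d.trans σ) m = p d (σ.symm m) := by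
  induction σ using Perm.swap_induction_on generalizing m with
  | one => rfl
  | swap_mul σ i j _ ih =>
    have hswap : p ((d.trans σ).trans (swap i j)) m = p (d.trans σ) (swap i j m) := by
      rcases eq_or_ne m i with rfl | hmi
      · rw [swap_apply_left]; exact (hexch _ m j).2.1
      rcases eq_or_ne m j with rfl | hmj
      · rw [swap_apply_right]; exact (hexch _ i m).2.2
      · rw [swap_apply_of_ne_of_ne hmi hmj]; exact (hexch _ i j).1 m hmi hmj
    rw [Perm.mul_def, ← trans_assoc, hswap, ih, symm_trans_apply, symm_swap]

theorem Exch.apply_eq_one_apply_symm (hexch : Exch p) (d : Perm (Fin n)) (m : Fin n) :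
    p d m = p 1 (d.symm m) :=
  hexch.apply_trans_s10 (Equiv.refl _) d m

theorem Exch.antitone_one (hexch : Exch p) (hmono : Mono p) : Antitone (p 1) := by
  intro k l hkl
  rcases hkl.eq_or_lt with rfl | hlt
  · rfl
  have hhigher : higherSet 1 k ⊆ higherSet (swap k l) k := by
    intro j (hj : j < k)
    have hjl : j ≠ l := (hj.trans hlt).ne
    show (swap k l).symm j < (swap k l).symm k
    rw [symm_swap, swap_apply_left, swap_apply_of_ne_of_ne hj.ne hjl]
    exact hj.trans hlt
  calc p 1 l = p (swap k l) k := by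
        rw [hexch.apply_eq_one_apply_symm (swap k l), symm_swap, swap_apply_left]
    _ ≤ p 1 k := hmono 1 (swap k l) k hhigher

theorem Exch.sum_eq_sum_map_symm (hexch : Exch p) (S : Finset (Fin n)) (d : Perm (Fin n)) :
    ∑ m ∈ S, p d m = ∑ k ∈ S.map d.symm.toEmbedding, p 1 k := by
  rw [Finset.sum_map]
  exact Finset.sum_congr rfl fun m _ => hexch.apply_eq_one_apply_symm d m

theorem Exch.sum_le_sum_of_inDS (hexch : Exch p) (hmono : Mono p) {S : Finset (Fin n)}
    {d : Perm (Fin n)} (hd : inDS S d) (d' : Perm (Fin n)) :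
    ∑ m ∈ S, p d' m ≤ ∑ m ∈ S, p d m := by
  rw [hexch.sum_eq_sum_map_symm S d', hexch.sum_eq_sum_map_symm S d]
  apply Finset.sum_le_sum_of_card_eq_of_forall_sdiff_le
  · rw [Finset.card_map, Finset.card_map]
  intro a ha b hb
  simp only [Finset.mem_sdiff, Finset.mem_map_equiv, symm_symm] at ha hb
  have hb_top : (b : ℕ) < #S := (hd b).mp hb.1
  have ha_low : #S ≤ (a : ℕ) := not_lt.mp fun h => ha.2 ((hd a).mpr h)
  exact hexch.antitone_one hmono (Fin.le_def.mpr (by omega))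

theorem Exch.Cfull_subset_RIB (hexch : Exch p) (hmono : Mono p) : Cfull p ⊆ RIB p := by
  rintro q ⟨hq0, x, hx, hqx⟩
  refine ⟨hq0, fun _ => 1, fun _ => one_pos, fun S d hd => ?_⟩
  simp only [one_mul]
  have hhull : convexHull ℝ (Pfull p) ⊆ {y | ∑ i ∈ S, y i ≤ ∑ i ∈ S, p d i} := by
    refine convexHull_min ?_ (convex_halfSpace_le ?_ _)
    · rintro _ ⟨d', rfl⟩
      exact hexch.sum_le_sum_of_inDS hmono hd d'
    · exact ⟨fun _ _ => Finset.sum_add_distrib, fun c y => by simp [Finset.mul_sum]⟩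
  exact (Finset.sum_le_sum fun i _ => hqx i).trans (hhull hx)

end Payoffs

theorem stmt10_general {n : ℕ}
    (p : Equiv.Perm (Fin n) → Fin n → ℝ)
    (hexch : Exch p) (hmono : Mono p) :
    interior (Cfull p) ⊆ RIB p :=
  interior_subset.trans (hexch.Cfull_subset_RIB hmono)

theorem stmt10 {n : ℕ} (hn : 1 ≤ n)
    (p : Equiv.Perm (Fin n) → Fin n → ℝ) (hp : ∀ d i, 0 ≤ p d i)
    (hexch : Exch p) (hmono : Mono p) :
    interior (Cfull p) ⊆ RIB p :=
  stmt10_general p hexch hmono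
end

section
/- Let α, w ∈ ℝⁿ with α_i > 0 and w_i > 0 for all i, let q, x, v ∈ ℝⁿ with q ⪰ 0, x ⪰ 0, v ⪰ 0, and let d : Fin n ≃ Fin n be a bijection such that w_{d(1)} x_{d(1)} ≥ w_{d(2)} x_{d(2)} ≥ ⋯ ≥ w_{d(n)} x_{d(n)}. Suppose that for every k ∈ {1, …, n}, Σ_{j=1}^{k} α_{d(j)} q_{d(j)} ≤ Σ_{j=1}^{k} α_{d(j)} v_{d(j)}. Then Σ_{i=1}^{n} α_i w_i x_i (q_i − v_i) ≤ 0. -/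
open Finset Set

theorem Finset.sum_mul_nonpos_of_antitoneOn_of_prefix_sum_nonpos {ι R : Type*} [LinearOrder ι]
    [Ring R] [PartialOrder R] [IsOrderedRing R] (s : Finset ι) (a b : ι → R)
    (ha : AntitoneOn a s) (ha₀ : ∀ i ∈ s, 0 ≤ a i)
    (hb : ∀ k ∈ s, ∑ j ∈ s with j ≤ k, b j ≤ 0) :
    ∑ i ∈ s, a i * b i ≤ 0 := by
  induction s using Finset.induction_on_max generalizing a with
  | empty => simp
  | insert m s hlt ih =>
    have hm : m ∈ insert m s := mem_insert_self m s
    have hms : m ∉ s := fun h => (hlt m h).false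
    -- Peel off the weight `a m` of the largest index: `a - a m` vanishes at `m` and stays
    -- antitone and nonnegative on `s`, while `a m` multiplies the full (prefix) sum.
    have hsplit : ∑ i ∈ insert m s, a i * b i =
        ∑ i ∈ s, (a i - a m) * b i + a m * ∑ i ∈ insert m s, b i := by
      rw [Finset.mul_sum, Finset.sum_insert hms, Finset.sum_insert hms]
      simp only [sub_mul, Finset.sum_sub_distrib]
      abel
    have hprefix_s : ∀ k ∈ s, ∑ j ∈ s with j ≤ k, b j ≤ 0 := by
      intro k hk
      have hmk : ¬ m ≤ k := not_le.mpr (hlt k hk)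
      simpa [Finset.filter_insert, hmk] using hb k (mem_insert_of_mem hk)
    have hrest : ∑ i ∈ s, (a i - a m) * b i ≤ 0 :=
      ih (fun i => a i - a m)
        (fun i hi j hj hij =>
          sub_le_sub_right (ha (mem_insert_of_mem hi) (mem_insert_of_mem hj) hij) _)
        (fun i hi => sub_nonneg.mpr (ha (mem_insert_of_mem hi) hm (hlt i hi).le))
        hprefix_s
    have htotal : ∑ i ∈ insert m s, b i ≤ 0 := by
      have hall : ∀ j ∈ insert m s, j ≤ m := fun j hj =>
        (mem_insert.mp hj).elim le_of_eq fun h => (hlt j h).le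
      simpa [Finset.filter_true_of_mem hall] using hb m hm
    rw [hsplit]
    exact add_nonpos hrest (mul_nonpos_of_nonneg_of_nonpos (ha₀ m hm) htotal)

theorem stmt11_general {n : ℕ} (α w q x v : Fin n → ℝ)
    (hw : ∀ i, 0 < w i) (hx : ∀ i, 0 ≤ x i)
    (d : Equiv.Perm (Fin n))
    (hsort : ∀ k l : Fin n, k ≤ l → w (d l) * x (d l) ≤ w (d k) * x (d k))
    (hprefix : ∀ k : Fin n,
      ∑ j ∈ Finset.univ.filter (fun j : Fin n => j ≤ k), α (d j) * q (d j) ≤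
      ∑ j ∈ Finset.univ.filter (fun j : Fin n => j ≤ k), α (d j) * v (d j)) :
    ∑ i, α i * w i * x i * (q i - v i) ≤ 0 := by
  have hreindex : ∑ i, α i * w i * x i * (q i - v i) =
      ∑ k, w (d k) * x (d k) * (α (d k) * (q (d k) - v (d k))) := by
    rw [← Equiv.sum_comp d]
    exact Finset.sum_congr rfl fun k _ => by ring
  rw [hreindex]
  refine Finset.sum_mul_nonpos_of_antitoneOn_of_prefix_sum_nonpos _ _ _
    (fun k _ l _ hkl => hsort k l hkl) (fun k _ => mul_nonneg (hw _).le (hx _)) fun k _ => ?_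
  simpa only [mul_sub, Finset.sum_sub_distrib, sub_nonpos] using hprefix k

theorem stmt11 {n : ℕ} (hn : 1 ≤ n) (α w q x v : Fin n → ℝ)
    (hα : ∀ i, 0 < α i) (hw : ∀ i, 0 < w i)
    (hq : ∀ i, 0 ≤ q i) (hx : ∀ i, 0 ≤ x i) (hv : ∀ i, 0 ≤ v i)
    (d : Equiv.Perm (Fin n))
    (hsort : ∀ k l : Fin n, k ≤ l → w (d l) * x (d l) ≤ w (d k) * x (d k))
    (hprefix : ∀ k : Fin n,
      ∑ j ∈ Finset.univ.filter (fun j : Fin n => j ≤ k), α (d j) * q (d j) ≤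
      ∑ j ∈ Finset.univ.filter (fun j : Fin n => j ≤ k), α (d j) * v (d j)) :
    ∑ i, α i * w i * x i * (q i - v i) ≤ 0 :=
  stmt11_general α w q x v hw hx d hsort hprefix
end

section
/- Let q ∈ ℝⁿ with q ⪰ 0 and ε > 0 be such that q + ε·𝟙 ∈ C, where 𝟙 = (1, …, 1). Then for every x ∈ ℝⁿ with x ⪰ 0, ⟨x, q⟩ − max_{d ∈ D} ⟨x, p(d)⟩ ≤ −ε · Σ_{i=1}^{n} x_i. -/
open Finset Set

theorem ip_add_const {n : ℕ} (x q : Fin n → ℝ) (c : ℝ) :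
    ip x (fun i => q i + c) = ip x q + c * ∑ i, x i := by
  simp only [ip, mul_add, Finset.sum_add_distrib, Finset.mul_sum, mul_comm]

theorem ip_le_of_mem_convexHull {n : ℕ} {x y : Fin n → ℝ} {s : Set (Fin n → ℝ)} {M : ℝ}
    (hs : ∀ z ∈ s, ip x z ≤ M) (hy : y ∈ convexHull ℝ s) : ip x y ≤ M :=
  convexHull_min hs (convex_halfSpace_le (dotProductBilin ℝ ℝ x).isLinear M) hy

theorem ip_le_sSup_of_mem_convexHull_Pfull {n : ℕ} (p : Equiv.Perm (Fin n) → Fin n → ℝ)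
    (x : Fin n → ℝ) {y : Fin n → ℝ} (hy : y ∈ convexHull ℝ (Pfull p)) :
    ip x y ≤ sSup (Set.range fun d : Equiv.Perm (Fin n) => ip x (p d)) := by
  refine ip_le_of_mem_convexHull ?_ hy
  rintro _ ⟨d, rfl⟩
  exact le_csSup (Set.finite_range _).bddAbove ⟨d, rfl⟩

theorem stmt12_general {n : ℕ}
    (p : Equiv.Perm (Fin n) → Fin n → ℝ)
    (q : Fin n → ℝ) (ε : ℝ)
    (hC : (fun i => q i + ε) ∈ Cfull p) :
    ∀ x : Fin n → ℝ, (∀ i, 0 ≤ x i) →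
      ip x q - sSup (Set.range fun d : Equiv.Perm (Fin n) => ip x (p d)) ≤
        -ε * ∑ i, x i := by
  intro x hx
  obtain ⟨-, y, hy, hqy⟩ := hC
  have hdom : ip x (fun i => q i + ε) ≤ ip x y := dotProduct_le_dotProduct_of_nonneg_left hqy hx
  have hmax := ip_le_sSup_of_mem_convexHull_Pfull p x hy
  rw [ip_add_const] at hdom
  linarith

theorem stmt12 {n : ℕ} (hn : 1 ≤ n)
    (p : Equiv.Perm (Fin n) → Fin n → ℝ) (hp : ∀ d i, 0 ≤ p d i)
    (q : Fin n → ℝ) (hq : ∀ i, 0 ≤ q i) (ε : ℝ) (hε : 0 < ε)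
    (hC : (fun i => q i + ε) ∈ Cfull p) :
    ∀ x : Fin n → ℝ, (∀ i, 0 ≤ x i) →
      ip x q - sSup (Set.range fun d : Equiv.Perm (Fin n) => ip x (p d)) ≤
        -ε * ∑ i, x i :=
  stmt12_general p q ε hC
end

section
/- Let S ⊆ N be a nonempty subset, λ ≥ 0, and v ∈ ℝⁿ with v ⪰ 0. Suppose there exist x, y ∈ convexHull(P^S) with x ⪯ λ·v^S and v^S ⪯ y (componentwise). Then for every nonzero α ∈ ℝⁿ with α ⪰ 0 and α_i = 0 for i ∉ S, min_{d ∈ D(S)} ⟨α, p(d)^S⟩ ≤ λ · max_{d ∈ D(S)} ⟨α, p(d)^S⟩. -/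
open Finset Set

/-!
The map `z ↦ ⟨α, z⟩` is linear, so on `conv(P^S)` it takes values between its minimum and its
maximum over `P^S`; since `α ⪰ 0` it is also monotone for the componentwise order. Hence
`min ≤ ⟨α, x⟩ ≤ λ ⟨α, v^S⟩ ≤ λ ⟨α, y⟩ ≤ λ max`.
-/

namespace LinearMap

variable {E : Type*} [AddCommGroup E] [Module ℝ E] (f : E →ₗ[ℝ] ℝ) {s : Set E} {z : E}

lemma csInf_image_le_of_mem_convexHull (hs : BddBelow (f '' s)) (hz : z ∈ convexHull ℝ s) :
    sInf (f '' s) ≤ f z := by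
  obtain ⟨y, hy, hyz⟩ := (f.concaveOn convex_univ).exists_le_of_mem_convexHull (subset_univ s) hz
  exact (csInf_le hs (mem_image_of_mem f hy)).trans hyz

lemma le_csSup_image_of_mem_convexHull (hs : BddAbove (f '' s)) (hz : z ∈ convexHull ℝ s) :
    f z ≤ sSup (f '' s) := by
  obtain ⟨y, hy, hzy⟩ := (f.convexOn convex_univ).exists_ge_of_mem_convexHull (subset_univ s) hz
  exact hzy.trans (le_csSup hs (mem_image_of_mem f hy))

end LinearMap

lemma PS_eq_image {n : ℕ} (p : Equiv.Perm (Fin n) → Fin n → ℝ) (S : Finset (Fin n)) :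
    PS p S = (fun d => projS S (p d)) '' {d | inDS S d} := by
  ext y
  simp [PS, eq_comm]

lemma PS_finite {n : ℕ} (p : Equiv.Perm (Fin n) → Fin n → ℝ) (S : Finset (Fin n)) :
    (PS p S).Finite := by
  rw [PS_eq_image]
  exact (Set.toFinite _).image _

lemma image_ip_projS_eq_image_dotProduct {n : ℕ} (p : Equiv.Perm (Fin n) → Fin n → ℝ)
    (S : Finset (Fin n)) (α : Fin n → ℝ) :
    (fun d => ip α (projS S (p d))) '' {d | inDS S d} = dotProductBilin ℝ ℝ α '' PS p S := by
  rw [PS_eq_image, Set.image_image]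
  rfl

theorem stmt15_general {n : ℕ}
    (p : Equiv.Perm (Fin n) → Fin n → ℝ)
    (S : Finset (Fin n)) (lam : ℝ) (hlam : 0 ≤ lam)
    (v : Fin n → ℝ)
    (hx : ∃ x ∈ convexHull ℝ (PS p S), ∀ i, x i ≤ lam * projS S v i)
    (hy : ∃ y ∈ convexHull ℝ (PS p S), ∀ i, projS S v i ≤ y i) :
    ∀ α : Fin n → ℝ, α ≠ 0 → (∀ i, 0 ≤ α i) → (∀ i, i ∉ S → α i = 0) →
      sInf ((fun d => ip α (projS S (p d))) '' {d | inDS S d}) ≤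
        lam * sSup ((fun d => ip α (projS S (p d))) '' {d | inDS S d}) := by
  intro α _ hα _
  obtain ⟨x, hxP, hxv⟩ := hx
  obtain ⟨y, hyP, hvy⟩ := hy
  rw [image_ip_projS_eq_image_dotProduct]
  set f := dotProductBilin ℝ ℝ α
  have hfin : (f '' PS p S).Finite := (PS_finite p S).image f
  calc sInf (f '' PS p S) ≤ f x := f.csInf_image_le_of_mem_convexHull hfin.bddBelow hxP
    _ ≤ f (lam • projS S v) := dotProduct_le_dotProduct_of_nonneg_left hxv hα
    _ = lam * f (projS S v) := dotProduct_smul lam α (projS S v)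
    _ ≤ lam * f y := by gcongr; exact dotProduct_le_dotProduct_of_nonneg_left hvy hα
    _ ≤ lam * sSup (f '' PS p S) := by
      gcongr; exact f.le_csSup_image_of_mem_convexHull hfin.bddAbove hyP

theorem stmt15 {n : ℕ} (hn : 1 ≤ n)
    (p : Equiv.Perm (Fin n) → Fin n → ℝ) (hp : ∀ d i, 0 ≤ p d i)
    (S : Finset (Fin n)) (hS : S.Nonempty) (lam : ℝ) (hlam : 0 ≤ lam)
    (v : Fin n → ℝ) (hv : ∀ i, 0 ≤ v i)
    (hx : ∃ x ∈ convexHull ℝ (PS p S), ∀ i, x i ≤ lam * projS S v i)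
    (hy : ∃ y ∈ convexHull ℝ (PS p S), ∀ i, projS S v i ≤ y i) :
    ∀ α : Fin n → ℝ, α ≠ 0 → (∀ i, 0 ≤ α i) → (∀ i, i ∉ S → α i = 0) →
      sInf ((fun d => ip α (projS S (p d))) '' {d | inDS S d}) ≤
        lam * sSup ((fun d => ip α (projS S (p d))) '' {d | inDS S d}) :=
  stmt15_general p S lam hlam v hx hy
end

section
/- Suppose the system satisfies monotonicity in payoffs. Then for every priority decision d ∈ D and every subset S ⊆ N, there exists a priority decision d′ ∈ D(S) (namely, the decision obtained by moving the users of S to the top while preserving the relative priority orders within S and within its complement) such that p_i(d′) ≥ p_i(d) for every i ∈ S. -/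
/-!
Rank every user of `S` by its `d`-rank and every other user by `n` plus its `d`-rank, and let
`d'` list the users in the order of these keys. Then `S` takes the top `|S|` ranks and both `S`
and its complement keep their internal order. For `i ∈ S` the users ahead of `i` under `d'` all lie
in `S` and are therefore ahead of `i` under `d` too, so monotonicity gives `p_i(d) ≤ p_i(d')`.
-/

open Finset Set

section

variable {n : ℕ}

theorem exists_perm_lt_iff_lt_of_injective {β : Type*} [LinearOrder β] {f : Fin n → β}
    (hf : Function.Injective f) : ∃ σ : Equiv.Perm (Fin n), ∀ i j, σ i < σ j ↔ f i < f j := by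
  have hsorted : StrictMono (f ∘ Tuple.sort f) :=
    (Tuple.monotone_sort f).strictMono_of_injective (hf.comp (Tuple.sort f).injective)
  refine ⟨(Tuple.sort f).symm, fun i j => ?_⟩
  simpa using (hsorted.lt_iff_lt (a := (Tuple.sort f).symm i) (b := (Tuple.sort f).symm j)).symm

theorem card_filter_perm_apply_lt (σ : Equiv.Perm (Fin n)) (k : Fin n) :
    #{j | σ j < k} = k := by
  have : ({j | σ j < k} : Finset (Fin n)) = (Finset.Iio k).map σ.symm.toEmbedding := by
    ext j
    simp
  rw [this, card_map, Fin.card_Iio]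

theorem inDS_symm_of_forall_lt {σ : Equiv.Perm (Fin n)} {S : Finset (Fin n)}
    (h : ∀ i ∈ S, ∀ j ∉ S, σ i < σ j) : inDS S σ.symm := by
  intro k
  have hcard := card_filter_perm_apply_lt σ k
  constructor
  · intro hk
    have hsub : ({j | σ j < k} : Finset (Fin n)) ⊆ S.erase (σ.symm k) := by
      intro j hj
      simp only [Finset.mem_filter, Finset.mem_univ, true_and] at hj
      refine mem_erase.2 ⟨by rintro rfl; simp at hj, ?_⟩
      by_contra hjS
      exact (h _ hk j hjS).not_gt (by simpa using hj)
    have := Finset.card_le_card hsub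
    rw [card_erase_of_mem hk] at this
    have := card_pos.2 ⟨_, hk⟩
    omega
  · intro hk
    by_contra hkS
    have hsub : S ⊆ ({j | σ j < k} : Finset (Fin n)) := by
      intro j hj
      simpa using h j hj _ hkS
    have := Finset.card_le_card hsub
    omega

theorem higherSet_subset_of_inDS {S : Finset (Fin n)} {d d' : Equiv.Perm (Fin n)}
    (hd' : inDS S d')
    (horder : ∀ i ∈ S, ∀ j ∈ S,
      ((d.symm i : ℕ) < (d.symm j : ℕ) ↔ (d'.symm i : ℕ) < (d'.symm j : ℕ)))
    {i : Fin n} (hi : i ∈ S) : higherSet d' i ⊆ higherSet d i := by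
  intro j hj
  have hi_top : (d'.symm i : ℕ) < #S := (hd' _).1 (by simpa using hi)
  have hj' : j ∈ S := by simpa using (hd' (d'.symm j)).2 (hj.trans hi_top)
  exact (horder j hj' i hi).2 hj

def promoteKey (d : Equiv.Perm (Fin n)) (S : Finset (Fin n)) (i : Fin n) : ℕ :=
  if i ∈ S then d.symm i else n + d.symm i

theorem promoteKey_injective (d : Equiv.Perm (Fin n)) (S : Finset (Fin n)) :
    Function.Injective (promoteKey d S) := by
  intro i j h
  unfold promoteKey at h
  have hi := (d.symm i).isLt
  have hj := (d.symm j).isLt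
  apply d.symm.injective
  ext
  split_ifs at h <;> omega

theorem exists_inDS_preserving_order (d : Equiv.Perm (Fin n)) (S : Finset (Fin n)) :
    ∃ d' : Equiv.Perm (Fin n), inDS S d' ∧
      (∀ i ∈ S, ∀ j ∈ S,
        ((d.symm i : ℕ) < (d.symm j : ℕ) ↔ (d'.symm i : ℕ) < (d'.symm j : ℕ))) ∧
      (∀ i ∉ S, ∀ j ∉ S,
        ((d.symm i : ℕ) < (d.symm j : ℕ) ↔ (d'.symm i : ℕ) < (d'.symm j : ℕ))) := by
  obtain ⟨σ, hσ⟩ := exists_perm_lt_iff_lt_of_injective (promoteKey_injective d S)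
  refine ⟨σ.symm, inDS_symm_of_forall_lt fun i hi j hj => ?_, fun i hi j hj => ?_,
    fun i hi j hj => ?_⟩
  · rw [hσ, promoteKey, promoteKey, if_pos hi, if_neg hj]
    have := (d.symm i).isLt
    omega
  · simp only [Equiv.symm_symm, Fin.val_fin_lt, hσ, promoteKey, if_pos hi, if_pos hj]
  · simp only [Equiv.symm_symm, Fin.val_fin_lt, hσ, promoteKey, if_neg hi, if_neg hj]
    omega

end

theorem stmt16_general {n : ℕ}
    (p : Equiv.Perm (Fin n) → Fin n → ℝ)
    (hmono : Mono p) :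
    ∀ (d : Equiv.Perm (Fin n)) (S : Finset (Fin n)),
      ∃ d' : Equiv.Perm (Fin n), inDS S d' ∧
        (∀ i ∈ S, ∀ j ∈ S,
          ((d.symm i : ℕ) < (d.symm j : ℕ) ↔ (d'.symm i : ℕ) < (d'.symm j : ℕ))) ∧
        (∀ i ∉ S, ∀ j ∉ S,
          ((d.symm i : ℕ) < (d.symm j : ℕ) ↔ (d'.symm i : ℕ) < (d'.symm j : ℕ))) ∧
        ∀ i ∈ S, p d i ≤ p d' i := by
  intro d S
  obtain ⟨d', hd', hS, hSc⟩ := exists_inDS_preserving_order d S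
  exact ⟨d', hd', hS, hSc, fun i hi => hmono d' d i (higherSet_subset_of_inDS hd' hS hi)⟩

theorem stmt16 {n : ℕ} (hn : 1 ≤ n)
    (p : Equiv.Perm (Fin n) → Fin n → ℝ) (hp : ∀ d i, 0 ≤ p d i)
    (hmono : Mono p) :
    ∀ (d : Equiv.Perm (Fin n)) (S : Finset (Fin n)),
      ∃ d' : Equiv.Perm (Fin n), inDS S d' ∧
        (∀ i ∈ S, ∀ j ∈ S,
          ((d.symm i : ℕ) < (d.symm j : ℕ) ↔ (d'.symm i : ℕ) < (d'.symm j : ℕ))) ∧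
        (∀ i ∉ S, ∀ j ∉ S,
          ((d.symm i : ℕ) < (d.symm j : ℕ) ↔ (d'.symm i : ℕ) < (d'.symm j : ℕ))) ∧
        ∀ i ∈ S, p d i ≤ p d' i :=
  stmt16_general p hmono
end
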